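/- arXiv:1601.01196 — 11 statements merged into one kernel-verified Lean document; each statement's English description precedes it below -/
import Mathlib

section
/- Let (𝔤,[·,·,·]) be a 3-Lie algebra over ℝ. Then there exists a unique bilinear bracket [·,·]_F on the second exterior power ⋀²𝔤 satisfying [x₁∧x₂, y₁∧y₂]_F = [x₁,x₂,y₁]∧y₂ + y₁∧[x₁,x₂,y₂] for all x₁,x₂,y₁,y₂ ∈ 𝔤, and (⋀²𝔤,[·,·]_F) is a left Leibniz algebra, i.e. [X,[Y,Z]_F]_F = [[X,Y]_F,Z]_F + [Y,[X,Z]_F]_F for all X,Y,Z ∈ ⋀²𝔤. -/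
/-!
The fundamental identity says exactly that every `D = [x₁, x₂, ·]` is a derivation of the ternary
bracket, and skew-symmetry makes `x₁ ∧ x₂ ↦ [x₁, x₂, ·]` a well-defined linear map
`ad : ⋀²𝔤 → End 𝔤` whose image consists of derivations. Every endomorphism `D` of `𝔤` extends to
the endomorphism `D̃ : x ∧ y ↦ D x ∧ y + x ∧ D y` of `⋀²𝔤`, and `D ↦ D̃` preserves commutators.
The bracket is `[X, Y]_F = (ad X)~ Y`. If `D` is a derivation, then `ad (D̃ Y) = [D, ad Y]`;
for `D = ad X` this reads `ad [X, Y]_F = [ad X, ad Y]`, and applying `~` gives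
`L_{[X, Y]_F} = [L_X, L_Y]` for the left multiplications `L_X = [X, ·]_F`, which is the Leibniz
identity. Uniqueness holds because the wedges span `⋀²𝔤`.
-/

noncomputable def wedge {g : Type*} [AddCommGroup g] [Module ℝ g] (x y : g) :
    ⋀[ℝ]^2 g :=
  ⟨ExteriorAlgebra.ιMulti ℝ 2 ![x, y],
    ExteriorAlgebra.ιMulti_range ℝ 2 ⟨![x, y], rfl⟩⟩

namespace LinearMap.IsAlt

variable {R M N : Type*} [CommRing R] [AddCommGroup M] [Module R M] [AddCommGroup N] [Module R N]
  {B : M →ₗ[R] M →ₗ[R] N}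

def toAlternatingMap (hB : B.IsAlt) : M [⋀^Fin 2]→ₗ[R] N where
  toFun v := B (v 0) (v 1)
  map_update_add' v i x y := by
    fin_cases i <;> simp [Function.update]
  map_update_smul' v i r x := by
    fin_cases i <;> simp [Function.update]
  map_eq_zero_of_eq' v i j hv hij := by
    fin_cases i <;> fin_cases j <;> simp_all [hB.self_eq_zero]

noncomputable def liftExteriorPower (hB : B.IsAlt) : ⋀[R]^2 M →ₗ[R] N :=
  exteriorPower.alternatingMapLinearEquiv hB.toAlternatingMap

theorem liftExteriorPower_ιMulti (hB : B.IsAlt) (x y : M) :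
    hB.liftExteriorPower (exteriorPower.ιMulti R 2 ![x, y]) = B x y := by
  simp [liftExteriorPower, toAlternatingMap]

end LinearMap.IsAlt

section TernaryDerivation

variable {R M : Type*} [CommRing R] [AddCommGroup M] [Module R M]

def IsTernaryDerivation (T : M →ₗ[R] M →ₗ[R] Module.End R M) (D : Module.End R M) : Prop :=
  ∀ x y z, D (T x y z) = T (D x) y z + T x (D y) z + T x y (D z)

variable {T : M →ₗ[R] M →ₗ[R] Module.End R M} {D E : Module.End R M}

theorem isTernaryDerivation_zero : IsTernaryDerivation T 0 := fun x y z => by simp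

theorem IsTernaryDerivation.add (hD : IsTernaryDerivation T D) (hE : IsTernaryDerivation T E) :
    IsTernaryDerivation T (D + E) := fun x y z => by
  simp only [LinearMap.add_apply, map_add, hD x y z, hE x y z]
  abel

theorem IsTernaryDerivation.smul (r : R) (hD : IsTernaryDerivation T D) :
    IsTernaryDerivation T (r • D) := fun x y z => by
  simp only [LinearMap.smul_apply, map_smul, hD x y z, smul_add]

theorem IsTernaryDerivation.lie_eq (hD : IsTernaryDerivation T D) (x y : M) :
    ⁅D, T x y⁆ = T (D x) y + T x (D y) := LinearMap.ext fun z => by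
  simp only [Ring.lie_def, LinearMap.sub_apply, Module.End.mul_apply, LinearMap.add_apply,
    hD x y z, add_sub_cancel_right]

end TernaryDerivation

section Wedge

variable {g : Type*} [AddCommGroup g] [Module ℝ g]

theorem wedge_eq_ιMulti (x y : g) : wedge x y = exteriorPower.ιMulti ℝ 2 ![x, y] := rfl

theorem coe_wedge (x y : g) :
    (wedge x y : ExteriorAlgebra ℝ g) = ExteriorAlgebra.ι ℝ x * ExteriorAlgebra.ι ℝ y := by
  simp [wedge_eq_ιMulti, ExteriorAlgebra.ιMulti_apply]

noncomputable def wedgeBilin : g →ₗ[ℝ] g →ₗ[ℝ] ⋀[ℝ]^2 g :=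
  LinearMap.mk₂ ℝ wedge
    (fun x x' y => by ext; simp [coe_wedge, add_mul])
    (fun r x y => by ext; simp [coe_wedge])
    (fun x y y' => by ext; simp [coe_wedge, mul_add])
    (fun r x y => by ext; simp [coe_wedge])

@[simp]
theorem wedgeBilin_apply (x y : g) : wedgeBilin x y = wedge x y := rfl

theorem wedge_add_wedge_swap (x y : g) : wedge x y + wedge y x = 0 := by
  ext; simp [coe_wedge, ExteriorAlgebra.ι_add_mul_swap]

theorem LinearMap.IsAlt.liftExteriorPower_wedge {N : Type*} [AddCommGroup N] [Module ℝ N]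
    {B : g →ₗ[ℝ] g →ₗ[ℝ] N} (hB : B.IsAlt) (x y : g) :
    hB.liftExteriorPower (wedge x y) = B x y :=
  hB.liftExteriorPower_ιMulti x y

theorem wedge_induction {p : ⋀[ℝ]^2 g → Prop} (X : ⋀[ℝ]^2 g) (wedge : ∀ x y, p (wedge x y))
    (zero : p 0) (add : ∀ X Y, p X → p Y → p (X + Y))
    (smul : ∀ (r : ℝ) X, p X → p (r • X)) : p X := by
  have hX : X ∈ Submodule.span ℝ (Set.range (exteriorPower.ιMulti ℝ 2)) := by
    simp [exteriorPower.ιMulti_span]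
  induction hX using Submodule.span_induction with
  | mem w hw =>
    obtain ⟨v, rfl⟩ := hw
    simpa [wedge_eq_ιMulti, show ![v 0, v 1] = v from List.ofFn_inj.mp rfl]
      using wedge (v 0) (v 1)
  | zero => exact zero
  | add X Y _ _ hX hY => exact add X Y hX hY
  | smul r X _ hX => exact smul r X hX

theorem wedge_ext {N : Type*} [AddCommGroup N] [Module ℝ N] {f f' : ⋀[ℝ]^2 g →ₗ[ℝ] N}
    (h : ∀ x y, f (wedge x y) = f' (wedge x y)) : f = f' :=
  LinearMap.ext fun X => wedge_induction (p := fun X => f X = f' X) X h (by simp)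
    (fun _ _ hX hY => by simp [hX, hY]) (fun _ _ hX => by simp [hX])

theorem isAlt_wedgeBilin_comp_add_compl₂ (D : Module.End ℝ g) :
    (wedgeBilin ∘ₗ D + wedgeBilin.compl₂ D).IsAlt := fun x => by
  simpa using wedge_add_wedge_swap (D x) x

noncomputable def derivationExtension (D : Module.End ℝ g) : Module.End ℝ (⋀[ℝ]^2 g) :=
  (isAlt_wedgeBilin_comp_add_compl₂ D).liftExteriorPower

@[simp]
theorem derivationExtension_wedge (D : Module.End ℝ g) (x y : g) :
    derivationExtension D (wedge x y) = wedge (D x) y + wedge x (D y) := by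
  simp [derivationExtension, LinearMap.IsAlt.liftExteriorPower_wedge]

noncomputable def derivationExtensionₗ : Module.End ℝ g →ₗ[ℝ] Module.End ℝ (⋀[ℝ]^2 g) where
  toFun := derivationExtension
  map_add' D E := wedge_ext fun x y => by
    simp only [derivationExtension_wedge, LinearMap.add_apply]
    simp only [← wedgeBilin_apply, map_add, LinearMap.add_apply]
    abel
  map_smul' r D := wedge_ext fun x y => by
    simp only [derivationExtension_wedge, LinearMap.smul_apply]
    simp only [← wedgeBilin_apply, map_smul, LinearMap.smul_apply, RingHom.id_apply, smul_add]

theorem derivationExtension_lie (D E : Module.End ℝ g) :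
    derivationExtension ⁅D, E⁆ = ⁅derivationExtension D, derivationExtension E⁆ :=
  wedge_ext fun x y => by
    simp only [Ring.lie_def, LinearMap.sub_apply, Module.End.mul_apply,
      derivationExtension_wedge, map_add]
    simp only [← wedgeBilin_apply, map_sub, LinearMap.sub_apply]
    abel

end Wedge

section FundamentalBracket

variable {g : Type*} [AddCommGroup g] [Module ℝ g] {T : g →ₗ[ℝ] g →ₗ[ℝ] Module.End ℝ g}

noncomputable def fundamentalBracket (hT : T.IsAlt) :
    ⋀[ℝ]^2 g →ₗ[ℝ] ⋀[ℝ]^2 g →ₗ[ℝ] ⋀[ℝ]^2 g :=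
  derivationExtensionₗ ∘ₗ hT.liftExteriorPower

theorem fundamentalBracket_apply (hT : T.IsAlt) (X : ⋀[ℝ]^2 g) :
    fundamentalBracket hT X = derivationExtension (hT.liftExteriorPower X) := rfl

theorem fundamentalBracket_wedge_wedge (hT : T.IsAlt) (x₁ x₂ y₁ y₂ : g) :
    fundamentalBracket hT (wedge x₁ x₂) (wedge y₁ y₂) =
      wedge (T x₁ x₂ y₁) y₂ + wedge y₁ (T x₁ x₂ y₂) := by
  rw [fundamentalBracket_apply, hT.liftExteriorPower_wedge, derivationExtension_wedge]

theorem eq_fundamentalBracket (hT : T.IsAlt) {B : ⋀[ℝ]^2 g →ₗ[ℝ] ⋀[ℝ]^2 g →ₗ[ℝ] ⋀[ℝ]^2 g}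
    (hB : ∀ x₁ x₂ y₁ y₂, B (wedge x₁ x₂) (wedge y₁ y₂) =
      wedge (T x₁ x₂ y₁) y₂ + wedge y₁ (T x₁ x₂ y₂)) :
    B = fundamentalBracket hT :=
  wedge_ext fun x₁ x₂ => wedge_ext fun y₁ y₂ => by
    rw [hB, fundamentalBracket_wedge_wedge]

theorem isTernaryDerivation_liftExteriorPower (hT : T.IsAlt)
    (hFI : ∀ x₁ x₂, IsTernaryDerivation T (T x₁ x₂)) (X : ⋀[ℝ]^2 g) :
    IsTernaryDerivation T (hT.liftExteriorPower X) := by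
  induction X using wedge_induction with
  | wedge x₁ x₂ => rw [hT.liftExteriorPower_wedge]; exact hFI x₁ x₂
  | zero => rw [map_zero]; exact isTernaryDerivation_zero
  | add X X' hX hX' => rw [map_add]; exact hX.add hX'
  | smul r X hX => rw [map_smul]; exact hX.smul r

theorem liftExteriorPower_derivationExtension (hT : T.IsAlt) {D : Module.End ℝ g}
    (hD : IsTernaryDerivation T D) (Y : ⋀[ℝ]^2 g) :
    hT.liftExteriorPower (derivationExtension D Y) = ⁅D, hT.liftExteriorPower Y⁆ := by
  induction Y using wedge_induction with
  | wedge y₁ y₂ =>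
    rw [derivationExtension_wedge, map_add, hT.liftExteriorPower_wedge,
      hT.liftExteriorPower_wedge, hT.liftExteriorPower_wedge, hD.lie_eq]
  | zero => simp [Ring.lie_def]
  | add Y Y' hY hY' =>
    simp only [map_add, hY, hY', Ring.lie_def, mul_add, add_mul]
    abel
  | smul r Y hY =>
    simp only [map_smul, hY, Ring.lie_def, mul_smul_comm, smul_mul_assoc, smul_sub]

theorem fundamentalBracket_leibniz (hT : T.IsAlt)
    (hFI : ∀ x₁ x₂, IsTernaryDerivation T (T x₁ x₂)) (X Y Z : ⋀[ℝ]^2 g) :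
    fundamentalBracket hT X (fundamentalBracket hT Y Z) =
      fundamentalBracket hT (fundamentalBracket hT X Y) Z +
        fundamentalBracket hT Y (fundamentalBracket hT X Z) := by
  have hlie : ⁅fundamentalBracket hT X, fundamentalBracket hT Y⁆ =
      fundamentalBracket hT (fundamentalBracket hT X Y) := by
    rw [fundamentalBracket_apply, fundamentalBracket_apply, fundamentalBracket_apply,
      ← derivationExtension_lie, liftExteriorPower_derivationExtension hT
        (isTernaryDerivation_liftExteriorPower hT hFI X)]
  rw [← hlie]
  simp only [Ring.lie_def, LinearMap.sub_apply, Module.End.mul_apply, sub_add_cancel]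

end FundamentalBracket

structure IsSkewTrilinear {g : Type*} [AddCommGroup g] [Module ℝ g] (br : g → g → g → g) :
    Prop where
  add_left : ∀ x x' y z, br (x + x') y z = br x y z + br x' y z
  smul_left : ∀ (r : ℝ) x y z, br (r • x) y z = r • br x y z
  skew₁₂ : ∀ x y z, br x y z = -br y x z
  skew₂₃ : ∀ x y z, br x y z = -br x z y

namespace IsSkewTrilinear

variable {g : Type*} [AddCommGroup g] [Module ℝ g] {br : g → g → g → g}

theorem cyclic (h : IsSkewTrilinear br) (x y z : g) : br x y z = br z x y := by
  rw [h.skew₂₃, h.skew₁₂, neg_neg]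

theorem add_mid (h : IsSkewTrilinear br) (x y y' z : g) :
    br x (y + y') z = br x y z + br x y' z := by
  rw [h.skew₁₂, h.add_left, neg_add, ← h.skew₁₂, ← h.skew₁₂]

theorem smul_mid (h : IsSkewTrilinear br) (r : ℝ) (x y z : g) :
    br x (r • y) z = r • br x y z := by
  rw [h.skew₁₂, h.smul_left, ← smul_neg, ← h.skew₁₂]

theorem add_right (h : IsSkewTrilinear br) (x y z z' : g) :
    br x y (z + z') = br x y z + br x y z' := by
  rw [h.cyclic x y (z + z'), h.add_left, ← h.cyclic x y z, ← h.cyclic x y z']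

theorem smul_right (h : IsSkewTrilinear br) (r : ℝ) (x y z : g) :
    br x y (r • z) = r • br x y z := by
  rw [h.cyclic, h.smul_left, ← h.cyclic]

theorem self_left (h : IsSkewTrilinear br) (x z : g) : br x x z = 0 := by
  have hsum : (2 : ℝ) • br x x z = 0 := by
    rw [two_smul]
    nth_rewrite 1 [h.skew₁₂]
    exact neg_add_cancel _
  exact (smul_eq_zero.mp hsum).resolve_left two_ne_zero

noncomputable def toEnd (h : IsSkewTrilinear br) : g →ₗ[ℝ] g →ₗ[ℝ] Module.End ℝ g :=
  LinearMap.mk₂ ℝ (fun x y => ⟨⟨br x y, h.add_right x y⟩, fun r z => h.smul_right r x y z⟩)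
    (fun x x' y => LinearMap.ext fun z => h.add_left x x' y z)
    (fun r x y => LinearMap.ext fun z => h.smul_left r x y z)
    (fun x y y' => LinearMap.ext fun z => h.add_mid x y y' z)
    (fun r x y => LinearMap.ext fun z => h.smul_mid r x y z)

theorem isAlt_toEnd (h : IsSkewTrilinear br) : h.toEnd.IsAlt :=
  fun x => LinearMap.ext fun z => h.self_left x z

end IsSkewTrilinear

/-- Let `(g, br)` be a 3-Lie algebra over ℝ.  Then there is a unique bilinear
bracket `[·,·]_F` on `⋀² g` satisfying
`[x₁∧x₂, y₁∧y₂]_F = [x₁,x₂,y₁]∧y₂ + y₁∧[x₁,x₂,y₂]`, and this bracket makes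
`⋀² g` a left Leibniz algebra. -/
theorem fundamental_bracket_exists_unique_and_leibniz
    (g : Type*) [AddCommGroup g] [Module ℝ g]
    (br : g → g → g → g)
    (br_add₁ : ∀ x x' y z, br (x + x') y z = br x y z + br x' y z)
    (br_smul₁ : ∀ (r : ℝ) x y z, br (r • x) y z = r • br x y z)
    (br_skew₁₂ : ∀ x y z, br x y z = - br y x z)
    (br_skew₂₃ : ∀ x y z, br x y z = - br x z y)
    (br_fi : ∀ x₁ x₂ x₃ x₄ x₅,
      br x₁ x₂ (br x₃ x₄ x₅) =
        br (br x₁ x₂ x₃) x₄ x₅ + br x₃ (br x₁ x₂ x₄) x₅ + br x₃ x₄ (br x₁ x₂ x₅)) :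
    (∃! B : ⋀[ℝ]^2 g →ₗ[ℝ] ⋀[ℝ]^2 g →ₗ[ℝ] ⋀[ℝ]^2 g,
      ∀ x₁ x₂ y₁ y₂ : g,
        B (wedge x₁ x₂) (wedge y₁ y₂) =
          wedge (br x₁ x₂ y₁) y₂ + wedge y₁ (br x₁ x₂ y₂)) ∧
    (∀ B : ⋀[ℝ]^2 g →ₗ[ℝ] ⋀[ℝ]^2 g →ₗ[ℝ] ⋀[ℝ]^2 g,
      (∀ x₁ x₂ y₁ y₂ : g,
        B (wedge x₁ x₂) (wedge y₁ y₂) =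
          wedge (br x₁ x₂ y₁) y₂ + wedge y₁ (br x₁ x₂ y₂)) →
      ∀ X Y Z : ⋀[ℝ]^2 g, B X (B Y Z) = B (B X Y) Z + B Y (B X Z)) := by
  have hbr : IsSkewTrilinear br := ⟨br_add₁, br_smul₁, br_skew₁₂, br_skew₂₃⟩
  have hT := hbr.isAlt_toEnd
  refine ⟨⟨fundamentalBracket hT, fundamentalBracket_wedge_wedge hT,
    fun B hB => eq_fundamentalBracket hT hB⟩, fun B hB X Y Z => ?_⟩
  rw [eq_fundamentalBracket hT hB]
  exact fundamentalBracket_leibniz hT (fun x₁ x₂ => br_fi x₁ x₂) X Y Z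
end

section
/- Let V₀,V₁ be real vector spaces, let d = 0 : V₁ → V₀, let l₃ be given by an alternating trilinear map V₀³ → V₀ and a trilinear map V₀×V₀×V₁ → V₁ skew-symmetric in its V₀ arguments (extended by full skew-symmetry and vanishing on two V₁ arguments), and let l₅ : V₀⁵ → V₁ be multilinear, skew-symmetric in its first two and alternating in its last three arguments. Then (V₁,V₀,0,l₃,l₅) is a 2-term 3-Lie∞-algebra (i.e. conditions (a)–(g) hold with d = 0) if and only if: (i) (V₀, l₃|_{V₀³}) is a 3-Lie algebra; (ii) ρ(x,y)(f) := l₃(x,y,f) defines a representation of the 3-Lie algebra (V₀,l₃) on V₁; and (iii) l₅ is a 3-cocycle, i.e. l₅ satisfies identity (g), where every pure-V₀ occurrence of l₃ is the bracket of (V₀,l₃) and every occurrence of l₃ with a V₁ argument is ρ applied via the full skew-symmetry convention. -/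
/-- Conditions (a)–(g) of a 2-term 3-Lie∞-algebra `(V₁, V₀, d, l₃, l₅)`.
`t x y z` is `l₃ x y z` for `x y z : V₀`; `m x y f` is `l₃ x y f` for `f : V₁`
(occurrences of `l₃` with the `V₁`-argument in another slot are interpreted via
full skew-symmetry: `l₃ x f y = - m x y f`, `l₃ f x y = m x y f`; `l₃` vanishes
when at least two arguments lie in `V₁`); `p` is `l₅`. -/
def Conds {V₀ V₁ : Type*} [AddCommGroup V₀] [Module ℝ V₀] [AddCommGroup V₁] [Module ℝ V₁]
    (d : V₁ →ₗ[ℝ] V₀) (t : V₀ → V₀ → V₀ → V₀) (m : V₀ → V₀ → V₁ → V₁)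
    (p : V₀ → V₀ → V₀ → V₀ → V₀ → V₁) : Prop :=
  -- (a)
  (∀ x y f, d (m x y f) = t x y (d f)) ∧
  -- (c)
  (∀ f g x, - m (d f) x g = m (d g) x f) ∧
  -- (d)
  (∀ x₁ x₂ x₃ x₄ x₅, d (p x₁ x₂ x₃ x₄ x₅) =
    - t x₁ x₂ (t x₃ x₄ x₅) + t (t x₁ x₂ x₃) x₄ x₅
      + t x₃ (t x₁ x₂ x₄) x₅ + t x₃ x₄ (t x₁ x₂ x₅)) ∧
  -- (e)
  (∀ f x₂ x₃ x₄ x₅, p (d f) x₂ x₃ x₄ x₅ =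
    - m x₂ (t x₃ x₄ x₅) f + m x₄ x₅ (m x₂ x₃ f)
      - m x₃ x₅ (m x₂ x₄ f) + m x₃ x₄ (m x₂ x₅ f)) ∧
  -- (f)
  (∀ x₁ x₂ f x₄ x₅, p x₁ x₂ (d f) x₄ x₅ =
    - m x₁ x₂ (m x₄ x₅ f) + m x₄ x₅ (m x₁ x₂ f)
      + m (t x₁ x₂ x₄) x₅ f + m x₄ (t x₁ x₂ x₅) f) ∧
  -- (g)
  (∀ x₁ x₂ x₃ x₄ x₅ x₆ x₇,
    m x₆ x₇ (p x₁ x₂ x₃ x₄ x₅) - m x₅ x₇ (p x₁ x₂ x₃ x₄ x₆)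
      + m x₁ x₂ (p x₃ x₄ x₅ x₆ x₇) + m x₅ x₆ (p x₁ x₂ x₃ x₄ x₇)
      + p x₁ x₂ (t x₃ x₄ x₅) x₆ x₇ + p x₁ x₂ x₅ (t x₃ x₄ x₆) x₇
      + p x₁ x₂ x₅ x₆ (t x₃ x₄ x₇)
    = m x₃ x₄ (p x₁ x₂ x₅ x₆ x₇) + p (t x₁ x₂ x₃) x₄ x₅ x₆ x₇
      + p x₃ (t x₁ x₂ x₄) x₅ x₆ x₇ + p x₃ x₄ (t x₁ x₂ x₅) x₆ x₇
      + p x₃ x₄ x₅ (t x₁ x₂ x₆) x₇ + p x₁ x₂ x₃ x₄ (t x₅ x₆ x₇)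
      + p x₃ x₄ x₅ x₆ (t x₁ x₂ x₇))

/-- Skeletal 2-term 3-Lie∞-algebras (`d = 0`) are exactly the quadruples
`(V₀ a 3-Lie algebra, V₁, ρ a representation, l₅ a 3-cocycle)`. -/
theorem skeletal_iff_threeLie_rep_cocycle
    {V₀ V₁ : Type*} [AddCommGroup V₀] [Module ℝ V₀] [AddCommGroup V₁] [Module ℝ V₁]
    (t : V₀ → V₀ → V₀ → V₀) (m : V₀ → V₀ → V₁ → V₁)
    (p : V₀ → V₀ → V₀ → V₀ → V₀ → V₁)
    (t_add₁ : ∀ x x' y z, t (x + x') y z = t x y z + t x' y z)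
    (t_smul₁ : ∀ (r : ℝ) x y z, t (r • x) y z = r • t x y z)
    (t_skew₁₂ : ∀ x y z, t x y z = - t y x z)
    (t_skew₂₃ : ∀ x y z, t x y z = - t x z y)
    (m_add₁ : ∀ x x' y f, m (x + x') y f = m x y f + m x' y f)
    (m_smul₁ : ∀ (r : ℝ) x y f, m (r • x) y f = r • m x y f)
    (m_add₃ : ∀ x y f f', m x y (f + f') = m x y f + m x y f')
    (m_smul₃ : ∀ (r : ℝ) x y f, m x y (r • f) = r • m x y f)
    (m_skew : ∀ x y f, m x y f = - m y x f)
    (p_add₁ : ∀ x x' x₂ x₃ x₄ x₅, p (x + x') x₂ x₃ x₄ x₅ = p x x₂ x₃ x₄ x₅ + p x' x₂ x₃ x₄ x₅)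
    (p_smul₁ : ∀ (r : ℝ) x x₂ x₃ x₄ x₅, p (r • x) x₂ x₃ x₄ x₅ = r • p x x₂ x₃ x₄ x₅)
    (p_add₃ : ∀ x₁ x₂ x x' x₄ x₅, p x₁ x₂ (x + x') x₄ x₅ = p x₁ x₂ x x₄ x₅ + p x₁ x₂ x' x₄ x₅)
    (p_smul₃ : ∀ (r : ℝ) x₁ x₂ x x₄ x₅, p x₁ x₂ (r • x) x₄ x₅ = r • p x₁ x₂ x x₄ x₅)
    (p_skew₁₂ : ∀ x₁ x₂ x₃ x₄ x₅, p x₁ x₂ x₃ x₄ x₅ = - p x₂ x₁ x₃ x₄ x₅)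
    (p_skew₃₄ : ∀ x₁ x₂ x₃ x₄ x₅, p x₁ x₂ x₃ x₄ x₅ = - p x₁ x₂ x₄ x₃ x₅)
    (p_skew₄₅ : ∀ x₁ x₂ x₃ x₄ x₅, p x₁ x₂ x₃ x₄ x₅ = - p x₁ x₂ x₃ x₅ x₄) :
    Conds (0 : V₁ →ₗ[ℝ] V₀) t m p ↔
      -- (i) `(V₀, t)` is a 3-Lie algebra: the fundamental identity holds
      ((∀ x₁ x₂ x₃ x₄ x₅,
          t x₁ x₂ (t x₃ x₄ x₅) =
            t (t x₁ x₂ x₃) x₄ x₅ + t x₃ (t x₁ x₂ x₄) x₅ + t x₃ x₄ (t x₁ x₂ x₅)) ∧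
      -- (ii) `ρ(x,y)f := m x y f` is a representation of `(V₀, t)` on `V₁`
      (∀ x₁ x₂ y₁ y₂ f,
          m x₁ x₂ (m y₁ y₂ f) - m y₁ y₂ (m x₁ x₂ f) =
            m (t x₁ x₂ y₁) y₂ f + m y₁ (t x₁ x₂ y₂) f) ∧
      (∀ x y₁ y₂ y₃ f,
          m x (t y₁ y₂ y₃) f =
            m y₂ y₃ (m x y₁ f) - m y₁ y₃ (m x y₂ f) + m y₁ y₂ (m x y₃ f)) ∧
      -- (iii) `l₅ = p` is a 3-cocycle: identity (g)
      (∀ x₁ x₂ x₃ x₄ x₅ x₆ x₇,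
        m x₆ x₇ (p x₁ x₂ x₃ x₄ x₅) - m x₅ x₇ (p x₁ x₂ x₃ x₄ x₆)
          + m x₁ x₂ (p x₃ x₄ x₅ x₆ x₇) + m x₅ x₆ (p x₁ x₂ x₃ x₄ x₇)
          + p x₁ x₂ (t x₃ x₄ x₅) x₆ x₇ + p x₁ x₂ x₅ (t x₃ x₄ x₆) x₇
          + p x₁ x₂ x₅ x₆ (t x₃ x₄ x₇)
        = m x₃ x₄ (p x₁ x₂ x₅ x₆ x₇) + p (t x₁ x₂ x₃) x₄ x₅ x₆ x₇
          + p x₃ (t x₁ x₂ x₄) x₅ x₆ x₇ + p x₃ x₄ (t x₁ x₂ x₅) x₆ x₇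
          + p x₃ x₄ x₅ (t x₁ x₂ x₆) x₇ + p x₁ x₂ x₃ x₄ (t x₅ x₆ x₇)
          + p x₃ x₄ x₅ x₆ (t x₁ x₂ x₇)))  := by
  have t0 : ∀ y z, t 0 y z = 0 := fun y z => by
    have := t_smul₁ 0 (0 : V₀) y z; simpa using this
  have m0 : ∀ y f, m 0 y f = 0 := fun y f => by
    have := m_smul₁ 0 (0 : V₀) y f; simpa using this
  have tz3 : ∀ x y, t x y 0 = 0 := fun x y => by
    rw [t_skew₂₃, t_skew₁₂, t0, neg_zero, neg_zero]
  have p01 : ∀ x₂ x₃ x₄ x₅, p 0 x₂ x₃ x₄ x₅ = 0 := fun a b c e => by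
    have := p_smul₁ 0 (0 : V₀) a b c e; simpa using this
  have p03 : ∀ x₁ x₂ x₄ x₅, p x₁ x₂ 0 x₄ x₅ = 0 := fun a b c e => by
    have := p_smul₃ 0 a b (0 : V₀) c e; simpa using this
  constructor
  · rintro ⟨ha, hc, hd, he, hf, hg⟩
    refine ⟨?_, ?_, ?_, hg⟩
    · intro x₁ x₂ x₃ x₄ x₅
      have h := hd x₁ x₂ x₃ x₄ x₅
      simp only [LinearMap.zero_apply] at h
      linear_combination (norm := abel) h
    · intro x₁ x₂ y₁ y₂ f
      have h := hf x₁ x₂ f y₁ y₂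
      simp only [LinearMap.zero_apply, p03] at h
      linear_combination (norm := abel) h
    · intro x y₁ y₂ y₃ f
      have h := he f x y₁ y₂ y₃
      simp only [LinearMap.zero_apply, p01] at h
      linear_combination (norm := abel) h
  · rintro ⟨hfund, hrep1, hrep2, hcoc⟩
    refine ⟨?_, ?_, ?_, ?_, ?_, hcoc⟩
    · intro x y f; simp [tz3]
    · intro f g x; simp [m0]
    · intro x₁ x₂ x₃ x₄ x₅
      have h := hfund x₁ x₂ x₃ x₄ x₅
      simp only [LinearMap.zero_apply]
      linear_combination (norm := abel) h
    · intro f x₂ x₃ x₄ x₅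
      have h := hrep2 x₂ x₃ x₄ x₅ f
      simp only [LinearMap.zero_apply, p01]
      linear_combination (norm := abel) h
    · intro x₁ x₂ f x₄ x₅
      have h := hrep1 x₁ x₂ x₄ x₅ f
      simp only [LinearMap.zero_apply, p03]
      linear_combination (norm := abel) h
end

section
/- Let (V₁,V₀,d,l₃,0) be a strict 2-term 3-Lie∞-algebra (i.e. a 2-term 3-Lie∞-algebra with l₅ = 0). Define [f,g,h]_𝔤 := l₃(d f, d g, h) for f,g,h ∈ V₁. Then [·,·,·]_𝔤 is trilinear fully skew-symmetric and satisfies the fundamental identity, so (V₁,[·,·,·]_𝔤) is a 3-Lie algebra; moreover (V₀, l₃|_{V₀³}) is a 3-Lie algebra and d is a homomorphism of 3-Lie algebras, i.e. d([f,g,h]_𝔤) = l₃(d f, d g, d h) for all f,g,h ∈ V₁. -/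
/-- A 2-term 3-Lie∞-algebra `(V₁, V₀, d, l₃, l₅)`.
`t x y z` is `l₃ x y z` for `x y z : V₀`; `m x y f` is `l₃ x y f` for `f : V₁`
(occurrences of `l₃` with the `V₁`-argument in another slot are interpreted via
full skew-symmetry: `l₃ x f y = - m x y f`, `l₃ f x y = m x y f`; `l₃` vanishes
when at least two arguments lie in `V₁`); `p` is `l₅`. -/
structure TwoTerm3LieInfty (V₀ V₁ : Type*) [AddCommGroup V₀] [Module ℝ V₀]
    [AddCommGroup V₁] [Module ℝ V₁] where
  d : V₁ →ₗ[ℝ] V₀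
  t : V₀ → V₀ → V₀ → V₀
  m : V₀ → V₀ → V₁ → V₁
  p : V₀ → V₀ → V₀ → V₀ → V₀ → V₁
  t_add₁ : ∀ x x' y z, t (x + x') y z = t x y z + t x' y z
  t_smul₁ : ∀ (r : ℝ) x y z, t (r • x) y z = r • t x y z
  t_skew₁₂ : ∀ x y z, t x y z = - t y x z
  t_skew₂₃ : ∀ x y z, t x y z = - t x z y
  m_add₁ : ∀ x x' y f, m (x + x') y f = m x y f + m x' y f
  m_smul₁ : ∀ (r : ℝ) x y f, m (r • x) y f = r • m x y f
  m_add₃ : ∀ x y f f', m x y (f + f') = m x y f + m x y f'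
  m_smul₃ : ∀ (r : ℝ) x y f, m x y (r • f) = r • m x y f
  m_skew : ∀ x y f, m x y f = - m y x f
  p_add₁ : ∀ x x' x₂ x₃ x₄ x₅, p (x + x') x₂ x₃ x₄ x₅ = p x x₂ x₃ x₄ x₅ + p x' x₂ x₃ x₄ x₅
  p_smul₁ : ∀ (r : ℝ) x x₂ x₃ x₄ x₅, p (r • x) x₂ x₃ x₄ x₅ = r • p x x₂ x₃ x₄ x₅
  p_add₃ : ∀ x₁ x₂ x x' x₄ x₅, p x₁ x₂ (x + x') x₄ x₅ = p x₁ x₂ x x₄ x₅ + p x₁ x₂ x' x₄ x₅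
  p_smul₃ : ∀ (r : ℝ) x₁ x₂ x x₄ x₅, p x₁ x₂ (r • x) x₄ x₅ = r • p x₁ x₂ x x₄ x₅
  p_skew₁₂ : ∀ x₁ x₂ x₃ x₄ x₅, p x₁ x₂ x₃ x₄ x₅ = - p x₂ x₁ x₃ x₄ x₅
  p_skew₃₄ : ∀ x₁ x₂ x₃ x₄ x₅, p x₁ x₂ x₃ x₄ x₅ = - p x₁ x₂ x₄ x₃ x₅
  p_skew₄₅ : ∀ x₁ x₂ x₃ x₄ x₅, p x₁ x₂ x₃ x₄ x₅ = - p x₁ x₂ x₃ x₅ x₄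
  /-- (a) `d l₃(x,y,f) = l₃(x,y,d f)` -/
  condA : ∀ x y f, d (m x y f) = t x y (d f)
  /-- (c) `l₃(d f,g,x) = l₃(f,d g,x)` -/
  condC : ∀ f g x, - m (d f) x g = m (d g) x f
  /-- (d) -/
  condD : ∀ x₁ x₂ x₃ x₄ x₅, d (p x₁ x₂ x₃ x₄ x₅) =
    - t x₁ x₂ (t x₃ x₄ x₅) + t (t x₁ x₂ x₃) x₄ x₅
      + t x₃ (t x₁ x₂ x₄) x₅ + t x₃ x₄ (t x₁ x₂ x₅)
  /-- (e) -/
  condE : ∀ f x₂ x₃ x₄ x₅, p (d f) x₂ x₃ x₄ x₅ =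
    - m x₂ (t x₃ x₄ x₅) f + m x₄ x₅ (m x₂ x₃ f)
      - m x₃ x₅ (m x₂ x₄ f) + m x₃ x₄ (m x₂ x₅ f)
  /-- (f) -/
  condF : ∀ x₁ x₂ f x₄ x₅, p x₁ x₂ (d f) x₄ x₅ =
    - m x₁ x₂ (m x₄ x₅ f) + m x₄ x₅ (m x₁ x₂ f)
      + m (t x₁ x₂ x₄) x₅ f + m x₄ (t x₁ x₂ x₅) f
  /-- (g) -/
  condG : ∀ x₁ x₂ x₃ x₄ x₅ x₆ x₇,
    m x₆ x₇ (p x₁ x₂ x₃ x₄ x₅) - m x₅ x₇ (p x₁ x₂ x₃ x₄ x₆)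
      + m x₁ x₂ (p x₃ x₄ x₅ x₆ x₇) + m x₅ x₆ (p x₁ x₂ x₃ x₄ x₇)
      + p x₁ x₂ (t x₃ x₄ x₅) x₆ x₇ + p x₁ x₂ x₅ (t x₃ x₄ x₆) x₇
      + p x₁ x₂ x₅ x₆ (t x₃ x₄ x₇)
    = m x₃ x₄ (p x₁ x₂ x₅ x₆ x₇) + p (t x₁ x₂ x₃) x₄ x₅ x₆ x₇
      + p x₃ (t x₁ x₂ x₄) x₅ x₆ x₇ + p x₃ x₄ (t x₁ x₂ x₅) x₆ x₇
      + p x₃ x₄ x₅ (t x₁ x₂ x₆) x₇ + p x₁ x₂ x₃ x₄ (t x₅ x₆ x₇)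
      + p x₃ x₄ x₅ x₆ (t x₁ x₂ x₇)

/-- Let `(V₁, V₀, d, l₃, 0)` be a strict 2-term 3-Lie∞-algebra and set
`[f,g,h]_𝔤 := l₃(d f, d g, h)`.  Then `[·,·,·]_𝔤` is trilinear, fully
skew-symmetric and satisfies the fundamental identity (so `(V₁, [·,·,·]_𝔤)` is a
3-Lie algebra); `(V₀, l₃|_{V₀³})` is a 3-Lie algebra; and `d` is a homomorphism
of 3-Lie algebras. -/
theorem strict_gives_threeLie_structures
    {V₀ V₁ : Type*} [AddCommGroup V₀] [Module ℝ V₀] [AddCommGroup V₁] [Module ℝ V₁]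
    (L : TwoTerm3LieInfty V₀ V₁)
    (hstrict : ∀ x₁ x₂ x₃ x₄ x₅, L.p x₁ x₂ x₃ x₄ x₅ = 0)
    (B : V₁ → V₁ → V₁ → V₁)
    (hB : ∀ f g h, B f g h = L.m (L.d f) (L.d g) h) :
    -- `[·,·,·]_𝔤 = B` is trilinear
    (∀ f f' g h, B (f + f') g h = B f g h + B f' g h) ∧
    (∀ (r : ℝ) f g h, B (r • f) g h = r • B f g h) ∧
    (∀ f g g' h, B f (g + g') h = B f g h + B f g' h) ∧
    (∀ (r : ℝ) f g h, B f (r • g) h = r • B f g h) ∧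
    (∀ f g h h', B f g (h + h') = B f g h + B f g h') ∧
    (∀ (r : ℝ) f g h, B f g (r • h) = r • B f g h) ∧
    -- fully skew-symmetric
    (∀ f g h, B f g h = - B g f h) ∧
    (∀ f g h, B f g h = - B f h g) ∧
    -- `(V₁, B)` satisfies the fundamental identity
    (∀ f₁ f₂ f₃ f₄ f₅,
      B f₁ f₂ (B f₃ f₄ f₅) =
        B (B f₁ f₂ f₃) f₄ f₅ + B f₃ (B f₁ f₂ f₄) f₅ + B f₃ f₄ (B f₁ f₂ f₅)) ∧
    -- `(V₀, l₃|_{V₀³})` satisfies the fundamental identity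
    (∀ x₁ x₂ x₃ x₄ x₅,
      L.t x₁ x₂ (L.t x₃ x₄ x₅) =
        L.t (L.t x₁ x₂ x₃) x₄ x₅ + L.t x₃ (L.t x₁ x₂ x₄) x₅ + L.t x₃ x₄ (L.t x₁ x₂ x₅)) ∧
    -- `d` is a homomorphism of 3-Lie algebras
    (∀ f g h, L.d (B f g h) = L.t (L.d f) (L.d g) (L.d h)) := by
  
  have m_add2 : ∀ (x y y' : V₀) (f : V₁), L.m x (y + y') f = L.m x y f + L.m x y' f := by
    intro x y y' f
    rw [L.m_skew x (y + y'), L.m_add₁, neg_add, ← L.m_skew, ← L.m_skew]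
  have m_smul2 : ∀ (r : ℝ) (x y : V₀) (f : V₁), L.m x (r • y) f = r • L.m x y f := by
    intro r x y f
    rw [L.m_skew x (r • y), L.m_smul₁, ← smul_neg, ← L.m_skew]
  have skew23 : ∀ f g h, B f g h = - B f h g := by
    intro f g h
    rw [hB, hB, L.m_skew (L.d f) (L.d g), ← L.condC h g (L.d f), neg_neg,
      L.m_skew (L.d h) (L.d f)]
  refine ⟨?_, ?_, ?_, ?_, ?_, ?_, ?_, skew23, ?_, ?_, ?_⟩
  · intro f f' g h; simp [hB, map_add, L.m_add₁]
  · intro r f g h; simp [hB, map_smul, L.m_smul₁]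
  · intro f g g' h; simp [hB, map_add, m_add2]
  · intro r f g h; simp [hB, map_smul, m_smul2]
  · intro f g g' h; simp [hB, L.m_add₃]
  · intro r f g h; simp [hB, L.m_smul₃]
  · intro f g h; rw [hB, hB, L.m_skew]
  · intro f₁ f₂ f₃ f₄ f₅
    have hF := L.condF (L.d f₁) (L.d f₂) f₅ (L.d f₃) (L.d f₄)
    rw [hstrict] at hF
    have h3 : L.t (L.d f₁) (L.d f₂) (L.d f₃) = L.d (L.m (L.d f₁) (L.d f₂) f₃) :=
      (L.condA _ _ _).symm
    have h4 : L.t (L.d f₁) (L.d f₂) (L.d f₄) = L.d (L.m (L.d f₁) (L.d f₂) f₄) :=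
      (L.condA _ _ _).symm
    rw [h3, h4] at hF
    simp only [hB]
    rw [eq_comm, ← sub_eq_zero]
    rw [eq_comm, ← sub_eq_zero] at hF
    rw [← hF]; abel
  · intro x₁ x₂ x₃ x₄ x₅
    have hD := L.condD x₁ x₂ x₃ x₄ x₅
    rw [hstrict, map_zero] at hD
    rw [eq_comm, ← sub_eq_zero]
    rw [eq_comm, ← sub_eq_zero] at hD
    rw [← hD]; abel
  · intro f g h
    rw [hB, L.condA]
end

section
/- Let (V₁,V₀,d,l₃,0) be a strict 2-term 3-Lie∞-algebra. Define [f,g,h]_𝔤 := l₃(d f, d g, h) for f,g,h ∈ V₁ and α(x,y)(f) := l₃(x,y,f) for x,y ∈ V₀, f ∈ V₁. Then: (i) α is a representation of the 3-Lie algebra (V₀, l₃|_{V₀³}) on V₁; (ii) each α(x,y) is a derivation of [·,·,·]_𝔤, i.e. α(x,y)([f,g,h]_𝔤) = [α(x,y)f,g,h]_𝔤 + [f,α(x,y)g,h]_𝔤 + [f,g,α(x,y)h]_𝔤; (iii) the crossed module identities hold: d(α(x,y)f) = l₃(x,y,d f), α(d f, d g)(h) = [f,g,h]_𝔤, and α(x,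 d f)(g) = −α(x, d g)(f) for all x,y ∈ V₀ and f,g,h ∈ V₁. -/
/-- Let `(V₁, V₀, d, l₃, 0)` be a strict 2-term 3-Lie∞-algebra, set
`[f,g,h]_𝔤 := l₃(d f, d g, h)` and `α(x,y)f := l₃(x,y,f)`.  Then `α` is a
representation of the 3-Lie algebra `(V₀, l₃|_{V₀³})` on `V₁`, each `α(x,y)` is
a derivation of `[·,·,·]_𝔤`, and the crossed module identities hold. -/
theorem strict_gives_crossed_module
    {V₀ V₁ : Type*} [AddCommGroup V₀] [Module ℝ V₀] [AddCommGroup V₁] [Module ℝ V₁]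
    (L : TwoTerm3LieInfty V₀ V₁)
    (hstrict : ∀ x₁ x₂ x₃ x₄ x₅, L.p x₁ x₂ x₃ x₄ x₅ = 0)
    (B : V₁ → V₁ → V₁ → V₁)
    (hB : ∀ f g h, B f g h = L.m (L.d f) (L.d g) h)
    (α : V₀ → V₀ → V₁ → V₁)
    (hα : ∀ x y f, α x y f = L.m x y f) :
    -- (i) `α` is a representation of `(V₀, l₃|_{V₀³})` on `V₁`:
    (∀ x y f, α x y f = - α y x f) ∧
    (∀ x₁ x₂ y₁ y₂ f,
      α x₁ x₂ (α y₁ y₂ f) - α y₁ y₂ (α x₁ x₂ f) =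
        α (L.t x₁ x₂ y₁) y₂ f + α y₁ (L.t x₁ x₂ y₂) f) ∧
    (∀ x y₁ y₂ y₃ f,
      α x (L.t y₁ y₂ y₃) f =
        α y₂ y₃ (α x y₁ f) - α y₁ y₃ (α x y₂ f) + α y₁ y₂ (α x y₃ f)) ∧
    -- (ii) each `α(x,y)` is a derivation of `[·,·,·]_𝔤`:
    (∀ x y f g h,
      α x y (B f g h) = B (α x y f) g h + B f (α x y g) h + B f g (α x y h)) ∧
    -- (iii) the crossed module identities:
    (∀ x y f, L.d (α x y f) = L.t x y (L.d f)) ∧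
    (∀ f g h, α (L.d f) (L.d g) h = B f g h) ∧
    (∀ x f g, α x (L.d f) g = - α x (L.d g) f) := by
  refine ⟨fun x y f => by rw [hα, hα, L.m_skew],
    fun x₁ x₂ y₁ y₂ f => ?_, fun x y₁ y₂ y₃ f => ?_, fun x y f g h => ?_,
    fun x y f => by rw [hα, L.condA],
    fun f g h => by rw [hα, hB],
    fun x f g => ?_⟩
  · have h := L.condF x₁ x₂ f y₁ y₂
    rw [hstrict] at h
    simp only [hα]
    rw [← sub_eq_zero]
    rw [show L.m x₁ x₂ (L.m y₁ y₂ f) - L.m y₁ y₂ (L.m x₁ x₂ f)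
        - (L.m (L.t x₁ x₂ y₁) y₂ f + L.m y₁ (L.t x₁ x₂ y₂) f)
      = -(- L.m x₁ x₂ (L.m y₁ y₂ f) + L.m y₁ y₂ (L.m x₁ x₂ f)
        + L.m (L.t x₁ x₂ y₁) y₂ f + L.m y₁ (L.t x₁ x₂ y₂) f) from by abel, ← h, neg_zero]
  · have h := L.condE f x y₁ y₂ y₃
    rw [hstrict] at h
    simp only [hα]
    rw [← sub_eq_zero]
    rw [show L.m x (L.t y₁ y₂ y₃) f
        - (L.m y₂ y₃ (L.m x y₁ f) - L.m y₁ y₃ (L.m x y₂ f) + L.m y₁ y₂ (L.m x y₃ f))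
      = -(- L.m x (L.t y₁ y₂ y₃) f + L.m y₂ y₃ (L.m x y₁ f)
        - L.m y₁ y₃ (L.m x y₂ f) + L.m y₁ y₂ (L.m x y₃ f)) from by abel, ← h, neg_zero]
  · have hh := L.condF x y h (L.d f) (L.d g)
    rw [hstrict] at hh
    simp only [hα, hB, L.condA]
    rw [← sub_eq_zero]
    rw [show L.m x y (L.m (L.d f) (L.d g) h)
        - (L.m (L.t x y (L.d f)) (L.d g) h + L.m (L.d f) (L.t x y (L.d g)) h
          + L.m (L.d f) (L.d g) (L.m x y h))
      = -(- L.m x y (L.m (L.d f) (L.d g) h) + L.m (L.d f) (L.d g) (L.m x y h)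
        + L.m (L.t x y (L.d f)) (L.d g) h + L.m (L.d f) (L.t x y (L.d g)) h) from by abel,
      ← hh, neg_zero]
  · have h := L.condC f g x
    simp only [hα]
    rw [L.m_skew x (L.d f) g, h, L.m_skew]
end

section
/- Let ((𝔤,[·,·,·]_𝔤),(𝔥,[·,·,·]_𝔥),μ,α) be a crossed module of 3-Lie algebras. Set V₁ := 𝔤, V₀ := 𝔥, d := μ, define l₃(x,y,z) := [x,y,z]_𝔥 for x,y,z ∈ V₀ and l₃(x,y,f) := α(x,y)(f) for x,y ∈ V₀, f ∈ V₁ (extended by full skew-symmetry and declared zero when two arguments lie in V₁), and set l₅ := 0. Then (V₁,V₀,d,l₃,0) is a strict 2-term 3-Lie∞-algebra, i.e. conditions (a)–(g) hold. -/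
/-- A crossed module of 3-Lie algebras `((𝔤,[·,·,·]_𝔤), (𝔥,[·,·,·]_𝔥), μ, α)`
gives a strict 2-term 3-Lie∞-algebra with `V₁ := 𝔤`, `V₀ := 𝔥`, `d := μ`,
`l₃ := [·,·,·]_𝔥` on `V₀` together with `l₃(x,y,f) := α(x,y)f`, and `l₅ := 0`:
conditions (a)–(g) hold. -/
theorem crossed_module_gives_strict
    {g h : Type*} [AddCommGroup g] [Module ℝ g] [AddCommGroup h] [Module ℝ h]
    -- the 3-Lie algebra (𝔤, brg)
    (brg : g → g → g → g)
    (brg_add₁ : ∀ x x' y z, brg (x + x') y z = brg x y z + brg x' y z)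
    (brg_smul₁ : ∀ (r : ℝ) x y z, brg (r • x) y z = r • brg x y z)
    (brg_skew₁₂ : ∀ x y z, brg x y z = - brg y x z)
    (brg_skew₂₃ : ∀ x y z, brg x y z = - brg x z y)
    (brg_fi : ∀ x₁ x₂ x₃ x₄ x₅,
      brg x₁ x₂ (brg x₃ x₄ x₅) =
        brg (brg x₁ x₂ x₃) x₄ x₅ + brg x₃ (brg x₁ x₂ x₄) x₅ + brg x₃ x₄ (brg x₁ x₂ x₅))
    -- the 3-Lie algebra (𝔥, brh)
    (brh : h → h → h → h)
    (brh_add₁ : ∀ x x' y z, brh (x + x') y z = brh x y z + brh x' y z)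
    (brh_smul₁ : ∀ (r : ℝ) x y z, brh (r • x) y z = r • brh x y z)
    (brh_skew₁₂ : ∀ x y z, brh x y z = - brh y x z)
    (brh_skew₂₃ : ∀ x y z, brh x y z = - brh x z y)
    (brh_fi : ∀ x₁ x₂ x₃ x₄ x₅,
      brh x₁ x₂ (brh x₃ x₄ x₅) =
        brh (brh x₁ x₂ x₃) x₄ x₅ + brh x₃ (brh x₁ x₂ x₄) x₅ + brh x₃ x₄ (brh x₁ x₂ x₅))
    -- μ is a homomorphism of 3-Lie algebras
    (μ : g →ₗ[ℝ] h)
    (μ_hom : ∀ f₁ f₂ f₃, μ (brg f₁ f₂ f₃) = brh (μ f₁) (μ f₂) (μ f₃))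
    -- α is a representation of 𝔥 on 𝔤 by derivations
    (α : h → h → g → g)
    (α_add₁ : ∀ x x' y f, α (x + x') y f = α x y f + α x' y f)
    (α_smul₁ : ∀ (r : ℝ) x y f, α (r • x) y f = r • α x y f)
    (α_add₃ : ∀ x y f f', α x y (f + f') = α x y f + α x y f')
    (α_smul₃ : ∀ (r : ℝ) x y f, α x y (r • f) = r • α x y f)
    (α_skew : ∀ x y f, α x y f = - α y x f)
    (α_rep₁ : ∀ x₁ x₂ y₁ y₂ f,
      α x₁ x₂ (α y₁ y₂ f) - α y₁ y₂ (α x₁ x₂ f) =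
        α (brh x₁ x₂ y₁) y₂ f + α y₁ (brh x₁ x₂ y₂) f)
    (α_rep₂ : ∀ x y₁ y₂ y₃ f,
      α x (brh y₁ y₂ y₃) f =
        α y₂ y₃ (α x y₁ f) - α y₁ y₃ (α x y₂ f) + α y₁ y₂ (α x y₃ f))
    (α_der : ∀ x y f₁ f₂ f₃,
      α x y (brg f₁ f₂ f₃) =
        brg (α x y f₁) f₂ f₃ + brg f₁ (α x y f₂) f₃ + brg f₁ f₂ (α x y f₃))
    -- the crossed module identities
    (cm₁ : ∀ x y f, μ (α x y f) = brh x y (μ f))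
    (cm₂ : ∀ f₁ f₂ f₃, α (μ f₁) (μ f₂) f₃ = brg f₁ f₂ f₃)
    (cm₃ : ∀ x f₁ f₂, α x (μ f₁) f₂ = - α x (μ f₂) f₁) :
    Conds μ brh α (fun _ _ _ _ _ => (0 : g)) := by
  refine ⟨cm₁, ?_, ?_, ?_, ?_, ?_⟩
  · intro f g x
    rw [α_skew (μ f) x g, neg_neg, cm₃, α_skew (μ g) x f]
  · intro x₁ x₂ x₃ x₄ x₅
    simp only [map_zero]
    rw [brh_fi x₁ x₂ x₃ x₄ x₅]; abel
  · intro f x₂ x₃ x₄ x₅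
    rw [α_rep₂ x₂ x₃ x₄ x₅ f]; abel
  · intro x₁ x₂ f x₄ x₅
    have := α_rep₁ x₁ x₂ x₄ x₅ f
    rw [sub_eq_iff_eq_add] at this
    rw [this]; abel
  · intro x₁ x₂ x₃ x₄ x₅ x₆ x₇
    have h0 : ∀ x y : h, α x y (0 : g) = 0 := by
      intro x y
      have := α_add₃ x y 0 0
      simpa using this.symm
    simp [h0]
end

section
/- Let (A,{·,·,·}) be a 3-pre-Lie algebra and define [x,y,z]_C := {x,y,z} + {y,z,x} + {z,x,y}. Then [·,·,·]_C is trilinear fully skew-symmetric and satisfies the fundamental identity, i.e. (A,[·,·,·]_C) is a 3-Lie algebra. -/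
variable {A : Type*} [AddCommGroup A] [Module ℝ A]

/-- The induced 3-commutator `[x,y,z]_C = {x,y,z} + {y,z,x} + {z,x,y}`. -/
def cBr (pre : A → A → A → A) (x y z : A) : A :=
  pre x y z + pre y z x + pre z x y

/-- If `(A, {·,·,·})` is a 3-pre-Lie algebra then the induced 3-commutator
`[x,y,z]_C := {x,y,z} + {y,z,x} + {z,x,y}` is trilinear, fully skew-symmetric
and satisfies the fundamental identity: `(A, [·,·,·]_C)` is a 3-Lie algebra. -/
theorem threePreLie_gives_threeLie
    (pre : A → A → A → A)
    (pre_add₁ : ∀ x x' y z, pre (x + x') y z = pre x y z + pre x' y z)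
    (pre_smul₁ : ∀ (r : ℝ) x y z, pre (r • x) y z = r • pre x y z)
    (pre_add₃ : ∀ x y z z', pre x y (z + z') = pre x y z + pre x y z')
    (pre_smul₃ : ∀ (r : ℝ) x y z, pre x y (r • z) = r • pre x y z)
    (pre_skew : ∀ x y z, pre x y z = - pre y x z)
    (pre_ii : ∀ x₁ x₂ x₃ x₄ x₅,
      pre x₁ x₂ (pre x₃ x₄ x₅) =
        pre (cBr pre x₁ x₂ x₃) x₄ x₅ + pre x₃ (cBr pre x₁ x₂ x₄) x₅
          + pre x₃ x₄ (pre x₁ x₂ x₅))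
    (pre_iii : ∀ x₁ x₂ x₃ x₄ x₅,
      pre (cBr pre x₁ x₂ x₃) x₄ x₅ =
        pre x₁ x₂ (pre x₃ x₄ x₅) + pre x₂ x₃ (pre x₁ x₄ x₅)
          + pre x₃ x₁ (pre x₂ x₄ x₅)) :
    -- trilinear
    (∀ x x' y z, cBr pre (x + x') y z = cBr pre x y z + cBr pre x' y z) ∧
    (∀ (r : ℝ) x y z, cBr pre (r • x) y z = r • cBr pre x y z) ∧
    (∀ x y y' z, cBr pre x (y + y') z = cBr pre x y z + cBr pre x y' z) ∧
    (∀ (r : ℝ) x y z, cBr pre x (r • y) z = r • cBr pre x y z) ∧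
    (∀ x y z z', cBr pre x y (z + z') = cBr pre x y z + cBr pre x y z') ∧
    (∀ (r : ℝ) x y z, cBr pre x y (r • z) = r • cBr pre x y z) ∧
    -- fully skew-symmetric
    (∀ x y z, cBr pre x y z = - cBr pre y x z) ∧
    (∀ x y z, cBr pre x y z = - cBr pre x z y) ∧
    -- fundamental identity
    (∀ x₁ x₂ x₃ x₄ x₅,
      cBr pre x₁ x₂ (cBr pre x₃ x₄ x₅) =
        cBr pre (cBr pre x₁ x₂ x₃) x₄ x₅ + cBr pre x₃ (cBr pre x₁ x₂ x₄) x₅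
          + cBr pre x₃ x₄ (cBr pre x₁ x₂ x₅)) := by
  -- additivity and scalars in the middle argument
  have padd₂ : ∀ x y y' z, pre x (y + y') z = pre x y z + pre x y' z := by
    intro x y y' z
    rw [pre_skew x (y + y') z, pre_add₁, pre_skew y x z, pre_skew y' x z]
    abel
  have psmul₂ : ∀ (r : ℝ) x y z, pre x (r • y) z = r • pre x y z := by
    intro r x y z
    rw [pre_skew x (r • y) z, pre_smul₁, pre_skew y x z, smul_neg, neg_neg]
  -- pre x y 0 = 0 and pre x y (-z) = - pre x y z
  have pzero₃ : ∀ x y, pre x y (0 : A) = 0 := by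
    intro x y
    have h := pre_add₃ x y 0 0
    rw [add_zero] at h
    exact (add_eq_left.mp h.symm)
  have pneg₃ : ∀ x y z, pre x y (-z) = - pre x y z := by
    intro x y z
    have h := pre_add₃ x y z (-z)
    rw [add_neg_cancel, pzero₃] at h
    exact (neg_eq_of_add_eq_zero_right h.symm).symm
  -- the "middle" reduction: a consequence of (ii) and (iii)
  have hmid : ∀ a b c d e : A, pre c (cBr pre a b d) e =
      -(pre c d (pre a b e)) - pre b c (pre a d e) - pre c a (pre b d e) := by
    intro a b c d e
    have h2 := pre_ii a b c d e
    rw [pre_iii a b c d e] at h2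
    -- h2 : X = (X + B + C) + M + D  where M is our goal's LHS
    have h3 : pre c (cBr pre a b d) e + (pre a b (pre c d e) + pre b c (pre a d e)
        + pre c a (pre b d e) + pre c d (pre a b e)) = pre a b (pre c d e) := by
      conv_rhs => rw [h2]
      abel
    calc pre c (cBr pre a b d) e
        = pre c (cBr pre a b d) e + (pre a b (pre c d e) + pre b c (pre a d e)
            + pre c a (pre b d e) + pre c d (pre a b e)) - (pre a b (pre c d e)
            + pre b c (pre a d e) + pre c a (pre b d e) + pre c d (pre a b e)) := by abel
      _ = pre a b (pre c d e) - (pre a b (pre c d e) + pre b c (pre a d e)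
            + pre c a (pre b d e) + pre c d (pre a b e)) := by rw [h3]
      _ = -(pre c d (pre a b e)) - pre b c (pre a d e) - pre c a (pre b d e) := by abel
  refine ⟨?_, ?_, ?_, ?_, ?_, ?_, ?_, ?_, ?_⟩
  · intro x x' y z
    simp only [cBr, pre_add₁, padd₂, pre_add₃]; abel
  · intro r x y z
    simp only [cBr, pre_smul₁, psmul₂, pre_smul₃, smul_add]
  · intro x y y' z
    simp only [cBr, pre_add₁, padd₂, pre_add₃]; abel
  · intro r x y z
    simp only [cBr, pre_smul₁, psmul₂, pre_smul₃, smul_add]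
  · intro x y z z'
    simp only [cBr, pre_add₁, padd₂, pre_add₃]; abel
  · intro r x y z
    simp only [cBr, pre_smul₁, psmul₂, pre_smul₃, smul_add]
  · intro x y z
    show pre x y z + pre y z x + pre z x y = -(pre y x z + pre x z y + pre z y x)
    rw [pre_skew x y z, pre_skew y z x, pre_skew z x y]
    abel
  · intro x y z
    show pre x y z + pre y z x + pre z x y = -(pre x z y + pre z y x + pre y x z)
    rw [pre_skew x y z, pre_skew y z x, pre_skew z x y]
    abel
  · intro x₁ x₂ x₃ x₄ x₅
    show pre x₁ x₂ (cBr pre x₃ x₄ x₅) + pre x₂ (cBr pre x₃ x₄ x₅) x₁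
        + pre (cBr pre x₃ x₄ x₅) x₁ x₂ =
      (pre (cBr pre x₁ x₂ x₃) x₄ x₅ + pre x₄ x₅ (cBr pre x₁ x₂ x₃)
          + pre x₅ (cBr pre x₁ x₂ x₃) x₄)
        + (pre x₃ (cBr pre x₁ x₂ x₄) x₅ + pre (cBr pre x₁ x₂ x₄) x₅ x₃
          + pre x₅ x₃ (cBr pre x₁ x₂ x₄))
        + (pre x₃ x₄ (cBr pre x₁ x₂ x₅) + pre x₄ (cBr pre x₁ x₂ x₅) x₃
          + pre (cBr pre x₁ x₂ x₅) x₃ x₄)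
    rw [pre_skew x₂ (cBr pre x₃ x₄ x₅) x₁]
    rw [pre_iii x₃ x₄ x₅ x₂ x₁, pre_iii x₃ x₄ x₅ x₁ x₂, pre_iii x₁ x₂ x₃ x₄ x₅,
      pre_iii x₁ x₂ x₄ x₅ x₃, pre_iii x₁ x₂ x₅ x₃ x₄]
    rw [hmid x₁ x₂ x₅ x₃ x₄, hmid x₁ x₂ x₃ x₄ x₅, hmid x₁ x₂ x₄ x₅ x₃]
    simp only [cBr, pre_add₃]
    rw [pre_skew x₅ x₂ x₁, pre_skew x₃ x₂ x₁, pre_skew x₄ x₂ x₁]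
    simp only [pneg₃]
    abel
end

section
/- Let (A,{·,·,·}) be a 3-pre-Lie algebra with induced 3-Lie bracket [x,y,z]_C := {x,y,z} + {y,z,x} + {z,x,y}. Then L : A×A → End(A) defined by L(x,y)(z) := {x,y,z} is a representation of the 3-Lie algebra (A,[·,·,·]_C) on A. -/
variable {A : Type*} [AddCommGroup A] [Module ℝ A]

/-- If `(A, {·,·,·})` is a 3-pre-Lie algebra, then `L(x,y)z := {x,y,z}` is a
representation of the induced 3-Lie algebra `(A, [·,·,·]_C)` on `A`. -/
theorem threePreLie_left_mult_is_representation
    (pre : A → A → A → A)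
    (pre_add₁ : ∀ x x' y z, pre (x + x') y z = pre x y z + pre x' y z)
    (pre_smul₁ : ∀ (r : ℝ) x y z, pre (r • x) y z = r • pre x y z)
    (pre_add₃ : ∀ x y z z', pre x y (z + z') = pre x y z + pre x y z')
    (pre_smul₃ : ∀ (r : ℝ) x y z, pre x y (r • z) = r • pre x y z)
    (pre_skew : ∀ x y z, pre x y z = - pre y x z)
    (pre_ii : ∀ x₁ x₂ x₃ x₄ x₅,
      pre x₁ x₂ (pre x₃ x₄ x₅) =
        pre (cBr pre x₁ x₂ x₃) x₄ x₅ + pre x₃ (cBr pre x₁ x₂ x₄) x₅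
          + pre x₃ x₄ (pre x₁ x₂ x₅))
    (pre_iii : ∀ x₁ x₂ x₃ x₄ x₅,
      pre (cBr pre x₁ x₂ x₃) x₄ x₅ =
        pre x₁ x₂ (pre x₃ x₄ x₅) + pre x₂ x₃ (pre x₁ x₄ x₅)
          + pre x₃ x₁ (pre x₂ x₄ x₅)) :
    -- `L` is skew-symmetric in its two arguments
    (∀ x y z, pre x y z = - pre y x z) ∧
    -- first representation identity
    (∀ x₁ x₂ y₁ y₂ z,
      pre x₁ x₂ (pre y₁ y₂ z) - pre y₁ y₂ (pre x₁ x₂ z) =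
        pre (cBr pre x₁ x₂ y₁) y₂ z + pre y₁ (cBr pre x₁ x₂ y₂) z) ∧
    -- second representation identity
    (∀ x y₁ y₂ y₃ z,
      pre x (cBr pre y₁ y₂ y₃) z =
        pre y₂ y₃ (pre x y₁ z) - pre y₁ y₃ (pre x y₂ z) + pre y₁ y₂ (pre x y₃ z)) := by
  have neg₃ : ∀ x y z, pre x y (-z) = - pre x y z := by
    intro x y z
    have := pre_smul₃ (-1 : ℝ) x y z
    simpa using this
  refine ⟨pre_skew, ?_, ?_⟩
  · intro x₁ x₂ y₁ y₂ z
    have h := pre_ii x₁ x₂ y₁ y₂ z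
    rw [h]; abel
  · intro x y₁ y₂ y₃ z
    have h := pre_iii y₁ y₂ y₃ x z
    have hx : pre x (cBr pre y₁ y₂ y₃) z = - pre (cBr pre y₁ y₂ y₃) x z :=
      pre_skew _ _ _
    rw [hx, h]
    have e1 : pre y₃ x z = - pre x y₃ z := pre_skew _ _ _
    have e2 : pre y₁ x z = - pre x y₁ z := pre_skew _ _ _
    have e3 : pre y₂ x z = - pre x y₂ z := pre_skew _ _ _
    rw [e1, e2, e3, neg₃, neg₃, neg₃]
    have e4 : pre y₃ y₁ (pre x y₂ z) = - pre y₁ y₃ (pre x y₂ z) := pre_skew _ _ _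
    rw [e4]; abel
end

section
/- Let (𝔤,[·,·,·]) be a finite-dimensional real 3-Lie algebra with a symplectic structure ω. For x,y,z ∈ 𝔤, let {x,y,z} be the unique element of 𝔤 with ω({x,y,z},w) = −ω(z,[x,y,w]) for all w ∈ 𝔤 (which exists by nondegeneracy of ω). Then (𝔤,{·,·,·}) is a 3-pre-Lie algebra, and it is compatible with the given bracket: {x,y,z} + {y,z,x} + {z,x,y} = [x,y,z] for all x,y,z ∈ 𝔤. -/
/-- Let `(𝔤, [·,·,·])` be a finite-dimensional real 3-Lie algebra with a
symplectic structure `ω`, and let `{x,y,z}` be the (unique, by nondegeneracy)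
element with `ω({x,y,z}, w) = -ω(z, [x,y,w])` for all `w`.  Then
`(𝔤, {·,·,·})` is a 3-pre-Lie algebra compatible with the given bracket. -/
theorem symplectic_gives_threePreLie
    (g : Type*) [AddCommGroup g] [Module ℝ g] [FiniteDimensional ℝ g]
    -- the 3-Lie algebra
    (br : g → g → g → g)
    (br_add₁ : ∀ x x' y z, br (x + x') y z = br x y z + br x' y z)
    (br_smul₁ : ∀ (r : ℝ) x y z, br (r • x) y z = r • br x y z)
    (br_skew₁₂ : ∀ x y z, br x y z = - br y x z)
    (br_skew₂₃ : ∀ x y z, br x y z = - br x z y)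
    (br_fi : ∀ x₁ x₂ x₃ x₄ x₅,
      br x₁ x₂ (br x₃ x₄ x₅) =
        br (br x₁ x₂ x₃) x₄ x₅ + br x₃ (br x₁ x₂ x₄) x₅ + br x₃ x₄ (br x₁ x₂ x₅))
    -- the symplectic structure
    (ω : g →ₗ[ℝ] g →ₗ[ℝ] ℝ)
    (ω_skew : ∀ x y, ω x y = - ω y x)
    (ω_nondeg : ∀ x, (∀ y, ω x y = 0) → x = 0)
    (ω_cocycle : ∀ x y z w,
      ω (br x y z) w - ω (br x y w) z + ω (br x z w) y - ω (br y z w) x = 0)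
    -- `{x,y,z}` is characterized by `ω({x,y,z},w) = -ω(z,[x,y,w])`
    (pre : g → g → g → g)
    (hpre : ∀ x y z w, ω (pre x y z) w = - ω z (br x y w)) :
    -- `(𝔤, pre)` is a 3-pre-Lie algebra: trilinearity,
    (∀ x x' y z, pre (x + x') y z = pre x y z + pre x' y z) ∧
    (∀ (r : ℝ) x y z, pre (r • x) y z = r • pre x y z) ∧
    (∀ x y y' z, pre x (y + y') z = pre x y z + pre x y' z) ∧
    (∀ (r : ℝ) x y z, pre x (r • y) z = r • pre x y z) ∧
    (∀ x y z z', pre x y (z + z') = pre x y z + pre x y z') ∧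
    (∀ (r : ℝ) x y z, pre x y (r • z) = r • pre x y z) ∧
    -- (i) skew-symmetry in the first two arguments,
    (∀ x y z, pre x y z = - pre y x z) ∧
    -- (ii)
    (∀ x₁ x₂ x₃ x₄ x₅,
      pre x₁ x₂ (pre x₃ x₄ x₅) =
        pre (pre x₁ x₂ x₃ + pre x₂ x₃ x₁ + pre x₃ x₁ x₂) x₄ x₅
          + pre x₃ (pre x₁ x₂ x₄ + pre x₂ x₄ x₁ + pre x₄ x₁ x₂) x₅
          + pre x₃ x₄ (pre x₁ x₂ x₅)) ∧
    -- (iii)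
    (∀ x₁ x₂ x₃ x₄ x₅,
      pre (pre x₁ x₂ x₃ + pre x₂ x₃ x₁ + pre x₃ x₁ x₂) x₄ x₅ =
        pre x₁ x₂ (pre x₃ x₄ x₅) + pre x₂ x₃ (pre x₁ x₄ x₅)
          + pre x₃ x₁ (pre x₂ x₄ x₅)) ∧
    -- compatibility with the given 3-Lie bracket
    (∀ x y z, pre x y z + pre y z x + pre z x y = br x y z) := by
  -- separation lemma from nondegeneracy
  have sep : ∀ a b : g, (∀ w, ω a w = ω b w) → a = b := by
    intro a b h
    have h0 : ∀ w, ω (a - b) w = 0 := by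
      intro w
      rw [map_sub, LinearMap.sub_apply, h w, sub_self]
    exact sub_eq_zero.mp (ω_nondeg _ h0)
  -- auxiliary bracket lemmas
  have br_neg₁ : ∀ x y z, br (-x) y z = - br x y z := by
    intro x y z
    simpa using br_smul₁ (-1) x y z
  have cyc : ∀ x y z, br x y z = br y z x := by
    intro x y z
    rw [br_skew₁₂ x y z, br_skew₂₃ y x z, neg_neg]
  have cyc2 : ∀ x y z, br x y z = br z x y := fun x y z => (cyc x y z).trans (cyc y z x)
  have br_neg₂ : ∀ x y z, br x (-y) z = - br x y z := by
    intro x y z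
    rw [br_skew₁₂ x (-y) z, br_neg₁, neg_neg, br_skew₁₂ y x z]
  have br_neg₃ : ∀ x y z, br x y (-z) = - br x y z := by
    intro x y z
    rw [br_skew₂₃ x y (-z), br_neg₂, neg_neg, br_skew₂₃ x z y]
  have br_add₂ : ∀ x y y' z, br x (y + y') z = br x y z + br x y' z := by
    intro x y y' z
    rw [br_skew₁₂ x (y + y') z, br_add₁, neg_add, br_skew₁₂ y x z, br_skew₁₂ y' x z,
      neg_neg, neg_neg]
  have br_smul₂ : ∀ (r : ℝ) x y z, br x (r • y) z = r • br x y z := by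
    intro r x y z
    rw [br_skew₁₂ x (r • y) z, br_smul₁, br_skew₁₂ y x z, smul_neg, neg_neg]
  -- compatibility
  have compat : ∀ x y z, pre x y z + pre y z x + pre z x y = br x y z := by
    intro x y z
    apply sep
    intro w
    have h5 : ω (br z x w) y = - ω (br x z w) y := by
      rw [br_skew₁₂ z x w, map_neg, LinearMap.neg_apply]
    simp only [map_add, LinearMap.add_apply, hpre]
    have hc := ω_cocycle x y z w
    have h1 := ω_skew z (br x y w)
    have h2 := ω_skew x (br y z w)
    have h3 := ω_skew y (br z x w)
    linarith
  -- the key transformed fundamental-identity instances, used for (iii)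
  refine ⟨?_, ?_, ?_, ?_, ?_, ?_, ?_, ?_, ?_, compat⟩
  · intro x x' y z
    apply sep; intro w
    simp only [hpre, map_add, LinearMap.add_apply, br_add₁]
    ring
  · intro r x y z
    apply sep; intro w
    simp only [hpre, map_smul, LinearMap.smul_apply, br_smul₁, smul_eq_mul]
    ring
  · intro x y y' z
    apply sep; intro w
    simp only [hpre, map_add, LinearMap.add_apply, br_add₂]
    ring
  · intro r x y z
    apply sep; intro w
    simp only [hpre, map_smul, LinearMap.smul_apply, br_smul₂, smul_eq_mul]
    ring
  · intro x y z z'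
    apply sep; intro w
    simp only [hpre, map_add, LinearMap.add_apply]
    ring
  · intro r x y z
    apply sep; intro w
    simp only [hpre, map_smul, LinearMap.smul_apply, smul_eq_mul]
    ring
  · intro x y z
    apply sep; intro w
    rw [hpre, map_neg, LinearMap.neg_apply, hpre, br_skew₁₂ y x w, map_neg]
    ring
  · -- (ii)
    intro x₁ x₂ x₃ x₄ x₅
    rw [compat x₁ x₂ x₃, compat x₁ x₂ x₄]
    apply sep; intro w
    simp only [hpre, map_neg, neg_neg, map_add, LinearMap.add_apply]
    have h := congrArg (ω x₅) (br_fi x₁ x₂ x₃ x₄ w)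
    simp only [map_add] at h
    linarith
  · -- (iii)
    intro x₁ x₂ x₃ x₄ x₅
    rw [compat x₁ x₂ x₃]
    apply sep; intro w
    simp only [hpre, map_neg, neg_neg, map_add, LinearMap.add_apply]
    have h1 := br_fi x₁ w x₂ x₃ x₄
    rw [cyc2 x₁ w (br x₂ x₃ x₄), br_skew₂₃ x₁ w x₂, br_skew₂₃ x₁ w x₃, br_skew₂₃ x₁ w x₄,
      br_neg₁, br_neg₂, br_neg₃, br_skew₁₂ x₂ (br x₁ x₃ w) x₄,
      cyc2 x₂ x₃ (br x₁ x₄ w)] at h1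
    have h2 := br_fi x₂ x₃ x₁ x₄ w
    rw [cyc2 x₂ x₃ (br x₁ x₄ w), cyc2 x₂ x₃ x₁, br_skew₁₂ x₁ (br x₂ x₃ x₄) w,
      cyc2 x₁ x₄ (br x₂ x₃ w)] at h2
    have s1 := congrArg (ω x₅) h1
    have s2 := congrArg (ω x₅) h2
    simp only [map_add, map_neg, neg_neg] at s1 s2
    rw [cyc2 x₃ x₄ (br x₁ x₂ w), cyc2 x₁ x₄ (br x₂ x₃ w), cyc2 x₂ x₄ (br x₃ x₁ w),
      br_skew₁₂ x₃ x₁ w, br_neg₁, map_neg]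
    linarith
end

section
/- Let (𝔤,[·,·,·]) be a finite-dimensional real 3-Lie algebra with a symplectic structure ω, let ω♯ : 𝔤 → 𝔤* be the isomorphism ω♯(x)(y) = ω(x,y), let {x,y,z} be the unique element with ω({x,y,z},w) = −ω(z,[x,y,w]) for all w, and define L*_{x,y} : 𝔤* → 𝔤* by (L*_{x,y}ξ)(w) = −ξ({x,y,w}). Then for all x,y,z,w ∈ 𝔤: (i) L*_{x,y}(ω♯(z)) = ω♯([x,y,z]); and (ii) L*_{x,z}(ω♯(w)) = L*_{w,x}(ω♯(z)). -/
/-- Let `(𝔤, [·,·,·])` be a finite-dimensional real 3-Lie algebra with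
symplectic structure `ω`, `ω♯ : 𝔤 → 𝔤*` the induced isomorphism
`ω♯(x)(y) = ω(x,y)`, `{x,y,z}` the unique element with
`ω({x,y,z},w) = -ω(z,[x,y,w])`, and `(L*_{x,y}ξ)(w) = -ξ({x,y,w})` the dual of
left multiplication.  Then `L*_{x,y}(ω♯ z) = ω♯([x,y,z])` and
`L*_{x,z}(ω♯ w) = L*_{w,x}(ω♯ z)`. -/
theorem dual_rep_sharp_identities
    (g : Type*) [AddCommGroup g] [Module ℝ g] [FiniteDimensional ℝ g]
    (br : g → g → g → g)
    (br_add₁ : ∀ x x' y z, br (x + x') y z = br x y z + br x' y z)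
    (br_smul₁ : ∀ (r : ℝ) x y z, br (r • x) y z = r • br x y z)
    (br_skew₁₂ : ∀ x y z, br x y z = - br y x z)
    (br_skew₂₃ : ∀ x y z, br x y z = - br x z y)
    (br_fi : ∀ x₁ x₂ x₃ x₄ x₅,
      br x₁ x₂ (br x₃ x₄ x₅) =
        br (br x₁ x₂ x₃) x₄ x₅ + br x₃ (br x₁ x₂ x₄) x₅ + br x₃ x₄ (br x₁ x₂ x₅))
    (ω : g →ₗ[ℝ] g →ₗ[ℝ] ℝ)
    (ω_skew : ∀ x y, ω x y = - ω y x)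
    (ω_nondeg : ∀ x, (∀ y, ω x y = 0) → x = 0)
    (ω_cocycle : ∀ x y z w,
      ω (br x y z) w - ω (br x y w) z + ω (br x z w) y - ω (br y z w) x = 0)
    (pre : g → g → g → g)
    (hpre : ∀ x y z w, ω (pre x y z) w = - ω z (br x y w))
    -- `ω♯ : 𝔤 → 𝔤*`, `ω♯(x)(y) = ω(x,y)`
    (ωsharp : g → Module.Dual ℝ g)
    (hsharp : ∀ x y, ωsharp x y = ω x y)
    -- `L*_{x,y} : 𝔤* → 𝔤*`, `(L*_{x,y}ξ)(w) = -ξ({x,y,w})`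
    (Lstar : g → g → Module.Dual ℝ g → Module.Dual ℝ g)
    (hL : ∀ x y ξ w, Lstar x y ξ w = - ξ (pre x y w)) :
    -- (i)
    (∀ x y z, Lstar x y (ωsharp z) = ωsharp (br x y z)) ∧
    -- (ii)
    (∀ x z w, Lstar x z (ωsharp w) = Lstar w x (ωsharp z)) := by
  have key : ∀ x y z w, ω z (pre x y w) = ω w (br x y z) := by
    intro x y z w
    rw [ω_skew, hpre, neg_neg]
  constructor
  · intro x y z
    apply LinearMap.ext
    intro v
    rw [hL, hsharp, hsharp, key, ω_skew (br x y z) v]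
  · intro x z w
    apply LinearMap.ext
    intro v
    rw [hL, hL, hsharp, hsharp, key, key]
    have : br w x z = br x z w := by
      rw [br_skew₁₂ w x z, br_skew₂₃ x w z, neg_neg]
    rw [this]
end

section
/- Let (𝔤,[·,·,·]) be a finite-dimensional real 3-Lie algebra with a symplectic structure ω, ω♯ : 𝔤 → 𝔤* the isomorphism ω♯(x)(y) = ω(x,y), {x,y,z} the unique element with ω({x,y,z},w) = −ω(z,[x,y,w]) for all w, and L*_{x,y} : 𝔤* → 𝔤* defined by (L*_{x,y}ξ)(w) = −ξ({x,y,w}). Set V₁ := 𝔤*, V₀ := 𝔤, d := (ω♯)⁻¹ : 𝔤* → 𝔤, define l₃(x,y,z) := [x,y,z] for x,y,z ∈ 𝔤 and l₃(x,y,ξ) := L*_{x,y}ξ for x,y ∈ 𝔤, ξ ∈ 𝔤* (extended by full skew-symmetry and declared zero when at least two arguments lie in 𝔤*), and set l₅ := 0. Then (𝔤*,𝔤,d,l₃,0) is a strict 2-term 3-Lie∞-algebra, i.e. conditions (a)–(g) hold. -/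
/-- Let `(𝔤, [·,·,·])` be a finite-dimensional real 3-Lie algebra with
symplectic structure `ω`.  With `V₁ := 𝔤*`, `V₀ := 𝔤`, `d := (ω♯)⁻¹`,
`l₃` the bracket on `𝔤` together with `l₃(x,y,ξ) := L*_{x,y}ξ` (where
`(L*_{x,y}ξ)(w) = -ξ({x,y,w})` and `ω({x,y,z},w) = -ω(z,[x,y,w])`), and
`l₅ := 0`, one gets a strict 2-term 3-Lie∞-algebra: conditions (a)–(g) hold. -/
theorem symplectic_gives_strict_two_term
    (g : Type*) [AddCommGroup g] [Module ℝ g] [FiniteDimensional ℝ g]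
    (br : g → g → g → g)
    (br_add₁ : ∀ x x' y z, br (x + x') y z = br x y z + br x' y z)
    (br_smul₁ : ∀ (r : ℝ) x y z, br (r • x) y z = r • br x y z)
    (br_skew₁₂ : ∀ x y z, br x y z = - br y x z)
    (br_skew₂₃ : ∀ x y z, br x y z = - br x z y)
    (br_fi : ∀ x₁ x₂ x₃ x₄ x₅,
      br x₁ x₂ (br x₃ x₄ x₅) =
        br (br x₁ x₂ x₃) x₄ x₅ + br x₃ (br x₁ x₂ x₄) x₅ + br x₃ x₄ (br x₁ x₂ x₅))
    (ω : g →ₗ[ℝ] g →ₗ[ℝ] ℝ)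
    (ω_skew : ∀ x y, ω x y = - ω y x)
    (ω_nondeg : ∀ x, (∀ y, ω x y = 0) → x = 0)
    (ω_cocycle : ∀ x y z w,
      ω (br x y z) w - ω (br x y w) z + ω (br x z w) y - ω (br y z w) x = 0)
    -- `{x,y,z}`, characterized by `ω({x,y,z},w) = -ω(z,[x,y,w])`
    (pre : g → g → g → g)
    (hpre : ∀ x y z w, ω (pre x y z) w = - ω z (br x y w))
    -- `d := (ω♯)⁻¹ : 𝔤* → 𝔤`, the inverse of `ω♯(x) = ω(x,·)`
    (d : Module.Dual ℝ g →ₗ[ℝ] g)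
    (hd : ∀ x : g, d (ω x) = x)
    (hd' : ∀ ξ : Module.Dual ℝ g, ω (d ξ) = ξ)
    -- the mixed bracket `l₃(x,y,ξ) := L*_{x,y}ξ`
    (m : g → g → Module.Dual ℝ g → Module.Dual ℝ g)
    (hm : ∀ x y ξ w, m x y ξ w = - ξ (pre x y w)) :
    Conds d br m (fun _ _ _ _ _ => (0 : Module.Dual ℝ g)) := by

  -- basic symmetry consequences of the bracket axioms
  have br_neg₁ : ∀ a y z, br (-a) y z = - br a y z := by
    intro a y z
    rw [← neg_one_smul ℝ a, br_smul₁, neg_one_smul]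
  have cyc : ∀ a b c, br a b c = br b c a := by
    intro a b c
    rw [br_skew₁₂ a b c, br_skew₂₃ b a c, neg_neg]
  have h13 : ∀ a b c, br a b c = - br c b a := by
    intro a b c
    rw [br_skew₂₃ a b c, cyc a c b]
  have br_neg₃ : ∀ a b c, br a b (-c) = - br a b c := by
    intro a b c
    rw [cyc a b (-c), cyc b (-c) a, br_neg₁ c a b, cyc c a b]
  have hωpre : ∀ x y z u, ω (pre x y z) u = ω (br x y u) z := by
    intro x y z u
    rw [hpre x y z u, ω_skew z (br x y u), neg_neg]
  -- the key formula : m x y f = ω(br x y (d f))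
  have key : ∀ x y f, m x y f = ω (br x y (d f)) := by
    intro x y f
    apply LinearMap.ext; intro w
    rw [hm x y f w]
    have hf : f (pre x y w) = ω (d f) (pre x y w) := by rw [hd']
    rw [hf, ω_skew (d f) (pre x y w), neg_neg, hωpre x y w (d f)]
  have ha : ∀ x y f, d (m x y f) = br x y (d f) := by
    intro x y f
    rw [key, hd]
  have m0 : ∀ x y, m x y (0 : Module.Dual ℝ g) = 0 := by
    intro x y
    apply LinearMap.ext; intro w
    rw [hm]; simp
  refine ⟨ha, ?_, ?_, ?_, ?_, ?_⟩
  · -- (c)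
    intro f gg x
    rw [key, key]
    have h := h13 (d f) x (d gg)
    rw [h, map_neg, neg_neg]
  · -- (d)
    intro x₁ x₂ x₃ x₄ x₅
    simp only [map_zero]
    rw [br_fi x₁ x₂ x₃ x₄ x₅]
    abel
  · -- (e)
    intro f x₂ x₃ x₄ x₅
    simp only []
    have hE : br x₂ (br x₃ x₄ x₅) (d f)
        = br x₄ x₅ (br x₂ x₃ (d f)) - br x₃ x₅ (br x₂ x₄ (d f))
          + br x₃ x₄ (br x₂ x₅ (d f)) := by
      rw [br_skew₂₃ x₂ (br x₃ x₄ x₅) (d f), br_fi x₂ (d f) x₃ x₄ x₅,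
          br_skew₂₃ x₂ x₃ (d f), br_skew₂₃ x₂ x₄ (d f), br_skew₂₃ x₂ x₅ (d f),
          br_neg₃ x₄ x₅ (br x₂ (d f) x₃), br_neg₃ x₃ x₅ (br x₂ (d f) x₄),
          br_neg₃ x₃ x₄ (br x₂ (d f) x₅),
          cyc (br x₂ (d f) x₃) x₄ x₅,
          br_skew₂₃ x₃ (br x₂ (d f) x₄) x₅]
      abel
    rw [key x₂ (br x₃ x₄ x₅) f, key x₄ x₅ (m x₂ x₃ f), key x₃ x₅ (m x₂ x₄ f),
        key x₃ x₄ (m x₂ x₅ f), ha x₂ x₃ f, ha x₂ x₄ f, ha x₂ x₅ f, hE]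
    simp only [map_add, map_sub, map_neg]
    abel
  · -- (f)
    intro x₁ x₂ f x₄ x₅
    simp only []
    rw [key x₁ x₂ (m x₄ x₅ f), key x₄ x₅ (m x₁ x₂ f),
        key (br x₁ x₂ x₄) x₅ f, key x₄ (br x₁ x₂ x₅) f,
        ha x₄ x₅ f, ha x₁ x₂ f, br_fi x₁ x₂ x₄ x₅ (d f)]
    simp only [map_add, map_neg]
    abel
  · -- (g)
    intro x₁ x₂ x₃ x₄ x₅ x₆ x₇
    simp only [m0]
    abel
end

section
/- Let 𝒱 = (V₁,V₀,d,l₃,l₅), 𝒱′ = (V₁′,V₀′,d′,l₃′,l₅′), 𝒱″ = (V₁″,V₀″,d″,l₃″,l₅″) be 2-term 3-Lie∞-algebras, and let φ = (φ₀,φ₁,φ₂) : 𝒱 → 𝒱′ and ψ = (ψ₀,ψ₁,ψ₂) : 𝒱′ → 𝒱″ be homomorphisms of 2-term 3-Lie∞-algebras. Define the composite by (ψ∘φ)₀ := ψ₀∘φ₀, (ψ∘φ)₁ := ψ₁∘φ₁, and (ψ∘φ)₂(x,y,z) := ψ₂(φ₀(x),φ₀(y),φ₀(z)) + ψ₁(φ₂(x,y,z)).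 Then ψ∘φ is a homomorphism of 2-term 3-Lie∞-algebras from 𝒱 to 𝒱″. -/
/-- `(f₀, f₁, f₂)` is a homomorphism of 2-term 3-Lie∞-algebras from `A` to `B`. -/
def IsHom {V₀ V₁ W₀ W₁ : Type*}
    [AddCommGroup V₀] [Module ℝ V₀] [AddCommGroup V₁] [Module ℝ V₁]
    [AddCommGroup W₀] [Module ℝ W₀] [AddCommGroup W₁] [Module ℝ W₁]
    (A : TwoTerm3LieInfty V₀ V₁) (B : TwoTerm3LieInfty W₀ W₁)
    (f₀ : V₀ →ₗ[ℝ] W₀) (f₁ : V₁ →ₗ[ℝ] W₁) (f₂ : V₀ → V₀ → V₀ → W₁) : Prop :=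
  -- chain map
  (∀ h, B.d (f₁ h) = f₀ (A.d h)) ∧
  -- `f₂` is an alternating trilinear map
  (∀ x x' y z, f₂ (x + x') y z = f₂ x y z + f₂ x' y z) ∧
  (∀ (r : ℝ) x y z, f₂ (r • x) y z = r • f₂ x y z) ∧
  (∀ x y z, f₂ x y z = - f₂ y x z) ∧
  (∀ x y z, f₂ x y z = - f₂ x z y) ∧
  -- (H1)
  (∀ x₁ x₂ x₃, B.d (f₂ x₁ x₂ x₃) =
    f₀ (A.t x₁ x₂ x₃) - B.t (f₀ x₁) (f₀ x₂) (f₀ x₃)) ∧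
  -- (H2)
  (∀ x₁ x₂ h, f₂ x₁ x₂ (A.d h) =
    f₁ (A.m x₁ x₂ h) - B.m (f₀ x₁) (f₀ x₂) (f₁ h)) ∧
  -- (H3)
  (∀ x₁ x₂ x₃ x₄ x₅,
    B.p (f₀ x₁) (f₀ x₂) (f₀ x₃) (f₀ x₄) (f₀ x₅)
      + B.m (f₀ x₄) (f₀ x₅) (f₂ x₁ x₂ x₃)
      - B.m (f₀ x₃) (f₀ x₅) (f₂ x₁ x₂ x₄)
      + B.m (f₀ x₃) (f₀ x₄) (f₂ x₁ x₂ x₅)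
      + f₂ (A.t x₁ x₂ x₃) x₄ x₅ + f₂ x₃ (A.t x₁ x₂ x₄) x₅ + f₂ x₃ x₄ (A.t x₁ x₂ x₅)
    = B.m (f₀ x₁) (f₀ x₂) (f₂ x₃ x₄ x₅) + f₂ x₁ x₂ (A.t x₃ x₄ x₅)
      + f₁ (A.p x₁ x₂ x₃ x₄ x₅))

/-- The composite of two homomorphisms of 2-term 3-Lie∞-algebras, with
`(ψ∘φ)₂(x,y,z) := ψ₂(φ₀ x, φ₀ y, φ₀ z) + ψ₁(φ₂(x,y,z))`, is again a
homomorphism. -/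
theorem isHom_comp
    {V₀ V₁ W₀ W₁ U₀ U₁ : Type*}
    [AddCommGroup V₀] [Module ℝ V₀] [AddCommGroup V₁] [Module ℝ V₁]
    [AddCommGroup W₀] [Module ℝ W₀] [AddCommGroup W₁] [Module ℝ W₁]
    [AddCommGroup U₀] [Module ℝ U₀] [AddCommGroup U₁] [Module ℝ U₁]
    (A : TwoTerm3LieInfty V₀ V₁) (B : TwoTerm3LieInfty W₀ W₁)
    (C : TwoTerm3LieInfty U₀ U₁)
    (φ₀ : V₀ →ₗ[ℝ] W₀) (φ₁ : V₁ →ₗ[ℝ] W₁) (φ₂ : V₀ → V₀ → V₀ → W₁)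
    (ψ₀ : W₀ →ₗ[ℝ] U₀) (ψ₁ : W₁ →ₗ[ℝ] U₁) (ψ₂ : W₀ → W₀ → W₀ → U₁)
    (hφ : IsHom A B φ₀ φ₁ φ₂) (hψ : IsHom B C ψ₀ ψ₁ ψ₂) :
    IsHom A C (ψ₀.comp φ₀) (ψ₁.comp φ₁)
      (fun x y z => ψ₂ (φ₀ x) (φ₀ y) (φ₀ z) + ψ₁ (φ₂ x y z)) := by
  obtain ⟨φd, φa1, φs1, φk12, φk23, φh1, φh2, φh3⟩ := hφ
  obtain ⟨ψd, ψa1, ψs1, ψk12, ψk23, ψh1, ψh2, ψh3⟩ := hψ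
  -- additivity of ψ₂ in each slot
  have ψa2 : ∀ x y y' z, ψ₂ x (y + y') z = ψ₂ x y z + ψ₂ x y' z := by
    intro x y y' z
    rw [ψk12, ψa1, ψk12 y, ψk12 y']; abel
  have ψa3 : ∀ x y z z', ψ₂ x y (z + z') = ψ₂ x y z + ψ₂ x y z' := by
    intro x y z z'
    rw [ψk23, ψa2, ψk23 x z, ψk23 x z']; abel
  have ψs2 : ∀ (r : ℝ) x y z, ψ₂ x (r • y) z = r • ψ₂ x y z := by
    intro r x y z
    rw [ψk12, ψs1, ψk12 y]; rw [smul_neg, neg_neg]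
  have ψs3 : ∀ (r : ℝ) x y z, ψ₂ x y (r • z) = r • ψ₂ x y z := by
    intro r x y z
    rw [ψk23, ψs2, ψk23 x z]; rw [smul_neg, neg_neg]
  have φa2 : ∀ x y y' z, φ₂ x (y + y') z = φ₂ x y z + φ₂ x y' z := by
    intro x y y' z
    rw [φk12, φa1, φk12 y, φk12 y']; abel
  have φa3 : ∀ x y z z', φ₂ x y (z + z') = φ₂ x y z + φ₂ x y z' := by
    intro x y z z'
    rw [φk23, φa2, φk23 x z, φk23 x z']; abel
  have φs2 : ∀ (r : ℝ) x y z, φ₂ x (r • y) z = r • φ₂ x y z := by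
    intro r x y z
    rw [φk12, φs1, φk12 y]; rw [smul_neg, neg_neg]
  have φs3 : ∀ (r : ℝ) x y z, φ₂ x y (r • z) = r • φ₂ x y z := by
    intro r x y z
    rw [φk23, φs2, φk23 x z]; rw [smul_neg, neg_neg]
  -- H2 variants of ψ in each slot
  have ψh2₁ : ∀ h w₁ w₂, ψ₂ (B.d h) w₁ w₂ =
      ψ₁ (B.m w₁ w₂ h) - C.m (ψ₀ w₁) (ψ₀ w₂) (ψ₁ h) := by
    intro h w₁ w₂
    rw [ψk12, ψk23, neg_neg, ψh2]
  have ψh2₂ : ∀ w₁ h w₂, ψ₂ w₁ (B.d h) w₂ =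
      -(ψ₁ (B.m w₁ w₂ h) - C.m (ψ₀ w₁) (ψ₀ w₂) (ψ₁ h)) := by
    intro w₁ h w₂
    rw [ψk23, ψh2]
  refine ⟨?_, ?_, ?_, ?_, ?_, ?_, ?_, ?_⟩
  · intro h
    simp only [LinearMap.comp_apply, ψd, φd]
  · intro x x' y z
    simp only [map_add, ψa1, φa1, map_add]; abel
  · intro r x y z
    simp only [map_smul, ψs1, φs1, map_smul, smul_add]
  · intro x y z
    dsimp only
    rw [ψk12 (φ₀ x), φk12 x, map_neg]; abel
  · intro x y z
    dsimp only
    rw [ψk23 (φ₀ x) (φ₀ y), φk23 x y, map_neg]; abel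
  · intro x₁ x₂ x₃
    simp only [LinearMap.comp_apply, map_add, ψh1, ψd, φh1, map_sub]
    abel
  · intro x₁ x₂ h
    have e : φ₀ (A.d h) = B.d (φ₁ h) := (φd h).symm
    simp only [LinearMap.comp_apply, e, ψh2, φh2, map_sub]
    abel
  · intro x₁ x₂ x₃ x₄ x₅
    simp only [LinearMap.comp_apply, C.m_add₃]
    have e₃ : φ₀ (A.t x₁ x₂ x₃) =
        B.d (φ₂ x₁ x₂ x₃) + B.t (φ₀ x₁) (φ₀ x₂) (φ₀ x₃) :=
      eq_add_of_sub_eq (φh1 x₁ x₂ x₃).symm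
    have e₄ : φ₀ (A.t x₁ x₂ x₄) =
        B.d (φ₂ x₁ x₂ x₄) + B.t (φ₀ x₁) (φ₀ x₂) (φ₀ x₄) :=
      eq_add_of_sub_eq (φh1 x₁ x₂ x₄).symm
    have e₅ : φ₀ (A.t x₁ x₂ x₅) =
        B.d (φ₂ x₁ x₂ x₅) + B.t (φ₀ x₁) (φ₀ x₂) (φ₀ x₅) :=
      eq_add_of_sub_eq (φh1 x₁ x₂ x₅).symm
    have e₃₄₅ : φ₀ (A.t x₃ x₄ x₅) =
        B.d (φ₂ x₃ x₄ x₅) + B.t (φ₀ x₃) (φ₀ x₄) (φ₀ x₅) :=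
      eq_add_of_sub_eq (φh1 x₃ x₄ x₅).symm
    rw [e₃, e₄, e₅, e₃₄₅, ψa1, ψa2, ψa3, ψa3, ψh2₁, ψh2₂, ψh2, ψh2]
    have hI := ψh3 (φ₀ x₁) (φ₀ x₂) (φ₀ x₃) (φ₀ x₄) (φ₀ x₅)
    have hII := congrArg ψ₁ (φh3 x₁ x₂ x₃ x₄ x₅)
    simp only [map_add, map_sub] at hII
    rw [← sub_eq_zero] at hI hII ⊢
    have h := congrArg₂ (· + ·) hI hII
    simp only [add_zero] at h
    abel_nf at h ⊢
    linear_combination (norm := abel) h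
end
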